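/- arXiv:1711.00230 — 7 statements merged into one kernel-verified Lean document; each statement's English description precedes it below -/
import Mathlib

section
/- A primitive positive-definite form ax²+bxy+cy² is Γ_0(2)-reduced with respect to the given fundamental region if and only if: |b| ≤ a, |b| ≤ 2c, and (|b| = a or |b| = 2c) implies b > 0. Moreover, the Γ_0(2)-reduced forms of discriminant -8 are exactly x²+2y², 2x²+y², and 3x²+2xy+y². -/
noncomputable def tauF (a b c : ℤ) : ℂ :=
  (-(b : ℂ) + Complex.I * Real.sqrt ((4 * a * c - b ^ 2 : ℤ) : ℝ)) / (2 * a)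

def QF : Set (ℤ × ℤ × ℤ) :=
  {q | 0 < q.1 ∧ q.2.1 ^ 2 - 4 * q.1 * q.2.2 < 0 ∧
    Int.gcd (Int.gcd q.1 q.2.1) q.2.2 = 1}

/-- The fundamental region for `Γ₀(2)` from the paper. -/
noncomputable def F2 : Set ℂ :=
  {τ | 0 < τ.im ∧ |τ.re| ≤ 1 / 2 ∧
    1 / 2 ≤ ‖τ - 1 / 2‖ ∧ 1 / 2 ≤ ‖τ + 1 / 2‖ ∧
    ((|τ.re| = 1 / 2 ∨ ‖τ - 1 / 2‖ = 1 / 2 ∨ ‖τ + 1 / 2‖ = 1 / 2) →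
      τ.re < 0)}

/-!
The point `τ = tauF a b c` is the root of `a τ² + b τ + c` in the upper half plane, so
`Re τ = -b / (2a)` and `|τ|² = c / a`. Since `|τ ∓ 1/2|² = |τ|² ∓ Re τ + 1/4`, the two circle
conditions of the region say `±Re τ ≤ |τ|²`, i.e. `|b| ≤ 2c`, with equality exactly on the arcs.
For discriminant `-8` the inequalities `|b| ≤ a`, `|b| ≤ 2c` give `b² ≤ 2ac = (b² + 8) / 2`, so
`ac ≤ 4` and only finitely many forms remain to be checked.
-/

open Complex

lemma normSq_sub_half (z : ℂ) : normSq (z - 1 / 2) = normSq z - z.re + 1 / 4 := by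
  simp only [normSq_apply, sub_re, sub_im, div_re, div_im, one_re, one_im]
  norm_num
  ring

lemma half_le_norm_sub_half_iff (z : ℂ) : 1 / 2 ≤ ‖z - 1 / 2‖ ↔ z.re ≤ normSq z := by
  rw [← abs_of_pos (one_half_pos : (0:ℝ) < 1 / 2), ← abs_norm, ← sq_le_sq, Complex.sq_norm,
    normSq_sub_half]
  constructor <;> intro h <;> linarith

lemma norm_sub_half_eq_half_iff (z : ℂ) : ‖z - 1 / 2‖ = 1 / 2 ↔ z.re = normSq z := by
  rw [← sq_eq_sq₀ (norm_nonneg _) one_half_pos.le, Complex.sq_norm, normSq_sub_half]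
  constructor <;> intro h <;> linarith

lemma norm_add_half_eq_norm_neg_sub_half (z : ℂ) : ‖z + 1 / 2‖ = ‖-z - 1 / 2‖ := by
  rw [← norm_neg, neg_add']

lemma half_le_norm_add_half_iff (z : ℂ) : 1 / 2 ≤ ‖z + 1 / 2‖ ↔ -z.re ≤ normSq z := by
  rw [norm_add_half_eq_norm_neg_sub_half, half_le_norm_sub_half_iff, neg_re, normSq_neg]

lemma norm_add_half_eq_half_iff (z : ℂ) : ‖z + 1 / 2‖ = 1 / 2 ↔ -z.re = normSq z := by
  rw [norm_add_half_eq_norm_neg_sub_half, norm_sub_half_eq_half_iff, neg_re, normSq_neg]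

lemma mem_F2_iff (z : ℂ) :
    z ∈ F2 ↔ 0 < z.im ∧ |z.re| ≤ 1 / 2 ∧ |z.re| ≤ normSq z ∧
      ((|z.re| = 1 / 2 ∨ |z.re| = normSq z) → z.re < 0) := by
  simp only [F2, Set.mem_ofPred_eq, half_le_norm_sub_half_iff, half_le_norm_add_half_iff,
    norm_sub_half_eq_half_iff, norm_add_half_eq_half_iff, abs_le', abs_eq (normSq_nonneg z),
    neg_eq_iff_eq_neg]
  tauto

lemma tauF_eq (a b c : ℤ) :
    tauF a b c = (-(b : ℂ) + I * √((4 * a * c - b ^ 2 : ℤ) : ℝ)) / ((2 * a : ℝ) : ℂ) := by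
  rw [tauF]; push_cast; rfl

lemma tauF_re (a b c : ℤ) : (tauF a b c).re = -b / (2 * a) := by
  rw [tauF_eq, div_ofReal_re]
  simp

lemma tauF_im (a b c : ℤ) : (tauF a b c).im = √((4 * a * c - b ^ 2 : ℤ) : ℝ) / (2 * a) := by
  rw [tauF_eq, div_ofReal_im]
  simp

lemma normSq_tauF {a b c : ℤ} (hd : b ^ 2 - 4 * a * c ≤ 0) : normSq (tauF a b c) = c / a := by
  have hsq : √((4 * a * c - b ^ 2 : ℤ) : ℝ) ^ 2 = 4 * a * c - b ^ 2 := by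
    rw [Real.sq_sqrt (by exact_mod_cast (by linarith : (0:ℤ) ≤ 4 * a * c - b ^ 2))]
    push_cast; ring
  rw [normSq_apply, tauF_re, tauF_im]
  rcases eq_or_ne (a : ℝ) 0 with ha | ha
  · simp [ha]
  · rw [← sub_eq_zero]
    field_simp
    linear_combination hsq

lemma tauF_im_pos {a b c : ℤ} (ha : 0 < a) (hd : b ^ 2 - 4 * a * c < 0) :
    0 < (tauF a b c).im := by
  rw [tauF_im]
  have : (0 : ℝ) < ((4 * a * c - b ^ 2 : ℤ) : ℝ) := by exact_mod_cast (by linarith)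
  positivity

theorem tauF_mem_F2_iff {a b c : ℤ} (ha : 0 < a) (hd : b ^ 2 - 4 * a * c < 0) :
    tauF a b c ∈ F2 ↔ |b| ≤ a ∧ |b| ≤ 2 * c ∧ ((|b| = a ∨ |b| = 2 * c) → 0 < b) := by
  have h2a : (0 : ℝ) < 2 * a := by positivity
  have hre : |(tauF a b c).re| = |b| / (2 * a) := by
    rw [tauF_re, abs_div, abs_neg, abs_of_pos h2a, Int.cast_abs]
  have h_half : (1 / 2 : ℝ) = a / (2 * a) := by field_simp
  have h_normSq : normSq (tauF a b c) = 2 * c / (2 * a) := by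
    rw [normSq_tauF hd.le]; field_simp
  have h_neg : (tauF a b c).re < 0 ↔ 0 < b := by
    rw [tauF_re, div_lt_iff₀ h2a, zero_mul, neg_lt_zero, Int.cast_pos]
  rw [mem_F2_iff, hre, h_half, h_normSq, h_neg, div_le_div_iff_of_pos_right h2a,
    div_le_div_iff_of_pos_right h2a, div_left_inj' h2a.ne', div_left_inj' h2a.ne',
    and_iff_right (tauF_im_pos ha hd)]
  norm_cast

lemma eq_of_reduced_of_discr_eq_neg_eight {a b c : ℤ} (ha : 0 < a) (hd : b ^ 2 - 4 * a * c = -8)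
    (hba : |b| ≤ a) (hbc : |b| ≤ 2 * c) (hb : (|b| = a ∨ |b| = 2 * c) → 0 < b) :
    (a, b, c) = (1, 0, 2) ∨ (a, b, c) = (2, 0, 1) ∨ (a, b, c) = (3, 2, 1) := by
  have hc : 0 < c := by nlinarith [sq_nonneg b]
  have hac : a * c ≤ 4 := by
    nlinarith [sq_abs b, mul_le_mul hba hbc (abs_nonneg b) ha.le]
  have ha4 : a ≤ 4 := by nlinarith
  have hc4 : c ≤ 4 := by nlinarith
  obtain ⟨hb₁, hb₂⟩ := abs_le.mp (hba.trans ha4)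
  simp only [Prod.mk.injEq]
  interval_cases a <;> interval_cases c <;> interval_cases b <;> simp_all

/-- `ax² + bxy + cy²` is `Γ₀(2)`-reduced iff `|b| ≤ a`, `|b| ≤ 2c`, and `(|b| = a` or
`|b| = 2c)` implies `b > 0`; and the `Γ₀(2)`-reduced forms of discriminant `-8` are exactly
`x² + 2y²`, `2x² + y²`, `3x² + 2xy + y²`. -/
theorem stmt_5 :
    (∀ a b c : ℤ, (a, b, c) ∈ QF →
      (tauF a b c ∈ F2 ↔
        (|b| ≤ a ∧ |b| ≤ 2 * c ∧ ((|b| = a ∨ |b| = 2 * c) → 0 < b)))) ∧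
    {A : ℤ × ℤ × ℤ | A ∈ QF ∧ A.2.1 ^ 2 - 4 * A.1 * A.2.2 = -8 ∧
        tauF A.1 A.2.1 A.2.2 ∈ F2} =
      {(1, 0, 2), (2, 0, 1), (3, 2, 1)} := by
  refine ⟨fun a b c hQ => tauF_mem_F2_iff hQ.1 hQ.2.1, ?_⟩
  ext ⟨a, b, c⟩
  simp only [Set.mem_ofPred_eq, Set.mem_insert_iff, Set.mem_singleton_iff]
  constructor
  · rintro ⟨⟨ha, hd, -⟩, hd₈, hF⟩
    obtain ⟨hba, hbc, hb⟩ := (tauF_mem_F2_iff ha hd).mp hF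
    exact eq_of_reduced_of_discr_eq_neg_eight ha hd₈ hba hbc hb
  · rintro (h | h | h) <;> simp only [Prod.mk.injEq] at h <;> obtain ⟨rfl, rfl, rfl⟩ := h <;>
      exact ⟨⟨by norm_num, by norm_num, by decide⟩, by norm_num,
        (tauF_mem_F2_iff (by norm_num) (by norm_num)).mpr (by norm_num)⟩
end

section
/- For any primitive positive-definite binary quadratic form Q of negative discriminant D and any coprime positive integers M, N, there exists a form Q' which is Γ_0(N)-equivalent to Q such that Q'(1,0) is coprime to M. -/
def actF (p q r s : ℤ) (A : ℤ × ℤ × ℤ) : ℤ × ℤ × ℤ :=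
  (A.1 * p ^ 2 + A.2.1 * p * r + A.2.2 * r ^ 2,
   2 * A.1 * p * q + A.2.1 * (p * s + q * r) + 2 * A.2.2 * r * s,
   A.1 * q ^ 2 + A.2.1 * q * s + A.2.2 * s ^ 2)

/-!
Modulo a prime `ℓ ∣ M` not all of `a, b, c` vanish, and `Q(x, y) = a x² + b x y + c y²` is
nonzero at `(1, 0)` if `ℓ ∤ a`, at every `(0, y)` with `ℓ ∤ y` if `ℓ ∣ a` but `ℓ ∤ c`, and at
every `(1, y)` with `ℓ ∤ y` otherwise, where `Q(1, y) ≡ b y`. As `ℓ ∤ N`, these residues of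
`(p, r)` are compatible with `N ∣ r` and `r ∣ p - 1`; the Chinese remainder theorem for the
products of the primes of `M` in the three classes gives such a pair, and `r ∣ p - 1` makes it
the first column of a matrix in `Γ₀(N)`.
-/

def primeFactorsProd (M : ℕ) (P : ℕ → Prop) [DecidablePred P] : ℕ :=
  ∏ ℓ ∈ M.primeFactors with P ℓ, ℓ

theorem Nat.Prime.dvd_primeFactorsProd_iff {ℓ M : ℕ} (hℓ : ℓ.Prime) (hM : M ≠ 0)
    (P : ℕ → Prop) [DecidablePred P] : ℓ ∣ primeFactorsProd M P ↔ ℓ ∣ M ∧ P ℓ := by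
  constructor
  · intro h
    obtain ⟨q, hq, hℓq⟩ := (Prime.dvd_finsetProd_iff hℓ.prime _).1 h
    rw [Finset.mem_filter, Nat.mem_primeFactors] at hq
    rw [(Nat.prime_dvd_prime_iff_eq hℓ hq.1.1).1 hℓq]
    exact ⟨hq.1.2.1, hq.2⟩
  · rintro ⟨hℓM, hP⟩
    exact Finset.dvd_prod_of_mem _
      (Finset.mem_filter.2 ⟨Nat.mem_primeFactors.2 ⟨hℓ, hℓM, hM⟩, hP⟩)

theorem primeFactorsProd_dvd (M : ℕ) (P : ℕ → Prop) [DecidablePred P] :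
    primeFactorsProd M P ∣ M :=
  (Finset.prod_dvd_prod_of_subset _ _ _ (Finset.filter_subset _ _)).trans
    (Nat.prod_primeFactors_dvd M)

theorem coprime_primeFactorsProd_not (M : ℕ) (P : ℕ → Prop) [DecidablePred P] :
    Nat.Coprime (primeFactorsProd M P) (primeFactorsProd M (¬ P ·)) := by
  refine Nat.Coprime.prod_left fun ℓ hℓ => Nat.Coprime.prod_right fun q hq => ?_
  simp only [Finset.mem_filter, Nat.mem_primeFactors] at hℓ hq
  exact (Nat.coprime_primes hℓ.1.1 hq.1.1).2 fun h => hq.2 (h ▸ hℓ.2)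

theorem quadratic_ne_zero_of_residues {F : Type*} [Field F] [DecidableEq F] {a b c x y : F}
    (habc : a ≠ 0 ∨ b ≠ 0 ∨ c ≠ 0) (hy : y = 0 ↔ a ≠ 0)
    (hx : x = if a = 0 ∧ c ≠ 0 then 0 else 1) : a * x ^ 2 + b * x * y + c * y ^ 2 ≠ 0 := by
  by_cases ha : a = 0 <;> by_cases hc : c = 0 <;> simp_all

theorem exists_coprime_pair_with_residues (M N : ℕ) (hM : M ≠ 0) (hMN : Nat.Coprime M N)
    (P Q : ℕ → Prop) [DecidablePred P] [DecidablePred Q] (hPQ : ∀ ℓ, P ℓ → ¬ Q ℓ) :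
    ∃ p r : ℤ, (N : ℤ) ∣ r ∧ r ∣ p - 1 ∧ ∀ ℓ : ℕ, ℓ.Prime → ℓ ∣ M →
      ((r : ZMod ℓ) = 0 ↔ P ℓ) ∧ (p : ZMod ℓ) = if Q ℓ then 0 else 1 := by
  set sP := primeFactorsProd M P
  set sQ := primeFactorsProd M Q
  set sQ' := primeFactorsProd M (¬ Q ·)
  have hcop : Nat.Coprime sQ (N * sQ') :=
    Nat.Coprime.mul_right (hMN.coprime_dvd_left (primeFactorsProd_dvd M Q))
      (coprime_primeFactorsProd_not M Q)
  obtain ⟨u, v, huv⟩ : IsCoprime (sQ : ℤ) (N * sQ') := by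
    exact_mod_cast Nat.isCoprime_iff_coprime.2 hcop
  have hsP : sP ∣ sQ' := Finset.prod_dvd_prod_of_subset _ _ _
    (Finset.monotone_filter_right _ fun ℓ _ => hPQ ℓ)
  refine ⟨u * sQ, N * sP, dvd_mul_right _ _, ?_, fun ℓ hℓ hℓM => ⟨?_, ?_⟩⟩
  · exact (mul_dvd_mul_left _ (Int.natCast_dvd_natCast.2 hsP)).trans
      ⟨-v, by linear_combination huv⟩
  · have hℓN : ¬ ℓ ∣ N := (hℓ.coprime_iff_not_dvd).1 (hMN.coprime_dvd_left hℓM)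
    rw [← Int.natCast_mul, ZMod.intCast_zmod_eq_zero_iff_dvd, Int.natCast_dvd_natCast,
      hℓ.dvd_mul, hℓ.dvd_primeFactorsProd_iff hM]
    tauto
  · split_ifs with hQ
    · rw [ZMod.intCast_zmod_eq_zero_iff_dvd]
      exact (Int.natCast_dvd_natCast.2
        ((hℓ.dvd_primeFactorsProd_iff hM Q).2 ⟨hℓM, hQ⟩)).mul_left u
    · have hℓsQ' : (ℓ : ℤ) ∣ sQ' :=
        Int.natCast_dvd_natCast.2 ((hℓ.dvd_primeFactorsProd_iff hM _).2 ⟨hℓM, hQ⟩)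
      rw [← sub_eq_zero, ← Int.cast_one, ← Int.cast_sub, ZMod.intCast_zmod_eq_zero_iff_dvd]
      exact hℓsQ'.trans ⟨-v * N, by linear_combination huv⟩

theorem Int.gcd_natCast_eq_one_of_forall_prime {X : ℤ} {M : ℕ}
    (h : ∀ ℓ : ℕ, ℓ.Prime → ℓ ∣ M → (X : ZMod ℓ) ≠ 0) : Int.gcd X M = 1 := by
  rw [Int.gcd_eq_natAbs, Int.natAbs_natCast]
  refine Nat.Coprime.symm (Nat.coprime_of_dvd fun ℓ hℓ hℓM hℓX => h ℓ hℓ hℓM ?_)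
  exact (ZMod.intCast_zmod_eq_zero_iff_dvd _ _).2 (Int.natCast_dvd.2 hℓX)

theorem intCast_zmod_ne_zero_of_gcd_eq_one {a b c : ℤ} (h : Int.gcd (Int.gcd a b) c = 1)
    {ℓ : ℕ} (hℓ : ℓ.Prime) : (a : ZMod ℓ) ≠ 0 ∨ (b : ZMod ℓ) ≠ 0 ∨ (c : ZMod ℓ) ≠ 0 := by
  simp only [ne_eq, ZMod.intCast_zmod_eq_zero_iff_dvd, ← not_and_or]
  rintro ⟨ha, hb, hc⟩
  have hℓ1 := Int.dvd_coe_gcd (Int.dvd_coe_gcd ha hb) hc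
  rw [h] at hℓ1
  exact hℓ.not_dvd_one (Int.natCast_dvd_natCast.1 hℓ1)

theorem stmt_9_general (M N : ℕ) (hM : 0 < M) (hMN : Nat.Coprime M N)
    (A : ℤ × ℤ × ℤ) (hA : A ∈ QF) :
    ∃ p q r s : ℤ, p * s - q * r = 1 ∧ (N : ℤ) ∣ r ∧
      Int.gcd (actF p q r s A).1 M = 1 := by
  obtain ⟨a, b, c⟩ := A
  obtain ⟨-, -, hprim⟩ := hA
  obtain ⟨p, r, hNr, ⟨k, hk⟩, hres⟩ := exists_coprime_pair_with_residues M N hM.ne' hMN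
    (fun ℓ => (a : ZMod ℓ) ≠ 0) (fun ℓ => (a : ZMod ℓ) = 0 ∧ (c : ZMod ℓ) ≠ 0)
    fun _ ha hQ => ha hQ.1
  refine ⟨p, k, r, 1, by linear_combination hk, hNr,
    Int.gcd_natCast_eq_one_of_forall_prime fun ℓ hℓ hℓM => ?_⟩
  have := Fact.mk hℓ
  obtain ⟨hr, hp⟩ := hres ℓ hℓ hℓM
  push_cast [actF]
  exact quadratic_ne_zero_of_residues (intCast_zmod_ne_zero_of_gcd_eq_one hprim hℓ) hr hp

/-- For any primitive positive-definite form `Q` of negative discriminant and coprime positive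
integers `M, N`, there is a form `Q'` which is `Γ₀(N)`-equivalent to `Q` whose leading
coefficient `Q'(1,0)` is coprime to `M`. -/
theorem stmt_9 (D : ℤ) (M N : ℕ) (hM : 0 < M) (hN : 0 < N) (hMN : Nat.Coprime M N)
    (A : ℤ × ℤ × ℤ) (hA : A ∈ QF) (hdisc : A.2.1 ^ 2 - 4 * A.1 * A.2.2 = D) (hD : D < 0) :
    ∃ p q r s : ℤ, p * s - q * r = 1 ∧ (N : ℤ) ∣ r ∧
      Int.gcd (actF p q r s A).1 M = 1 :=
  stmt_9_general M N hM hMN A hA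
end

section
/- Let O be an order of conductor f in an imaginary quadratic field K, and let a be an O_K-ideal with a + Nf·O_K = O_K. Then the natural map O/(a ∩ O) → O_K/a is an isomorphism; in particular N(a) = N(a ∩ O), and (a ∩ O)·O_K = a. -/
/-!
Since `Nf·O_K ⊆ O`, the coprimality `A + Nf·O_K = O_K` gives `O_K = A + O`: the natural map
`O → O_K/A` is onto, and the second isomorphism theorem equates the two indices. Writing
`1 = x + Nf·y` with `x ∈ A`, `y ∈ O_K`, the element `x = 1 - Nf·y` lies in `A ∩ O`, and every
`a ∈ A` is `x·a + (Nf·a)·y`, a sum of products of elements of `A ∩ O` with elements of `O_K`.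
-/

namespace Subring

variable {R : Type*} [CommRing R] (OK O : Subring R) (A : AddSubgroup R) {c : R}

theorem exists_mem_sub_mem_of_mul_mem (hcO : ∀ y ∈ OK, c * y ∈ O)
    (hAcop : ∀ z ∈ OK, ∃ x ∈ A, ∃ y ∈ OK, z = x + c * y) :
    ∀ z ∈ OK, ∃ w ∈ O, z - w ∈ A := by
  intro z hz
  obtain ⟨x, hx, y, hy, rfl⟩ := hAcop z hz
  exact ⟨c * y, hcO y hy, by simpa using hx⟩

theorem toAddSubgroup_eq_sup (hAle : A ≤ OK.toAddSubgroup) (hOle : O ≤ OK)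
    (hsurj : ∀ z ∈ OK, ∃ w ∈ O, z - w ∈ A) :
    OK.toAddSubgroup = A ⊔ O.toAddSubgroup := by
  refine le_antisymm (fun z hz => ?_) (sup_le hAle hOle)
  obtain ⟨w, hw, hzw⟩ := hsurj z hz
  rw [← sub_add_cancel z w]
  exact add_mem (AddSubgroup.mem_sup_left hzw) (AddSubgroup.mem_sup_right hw)

theorem closure_inf_mul_eq (hc : c ∈ OK) (hAsub : (A : Set R) ⊆ OK)
    (hAideal : ∀ x ∈ OK, ∀ y ∈ A, x * y ∈ A) (hcO : ∀ y ∈ OK, c * y ∈ O)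
    (hAcop : ∀ z ∈ OK, ∃ x ∈ A, ∃ y ∈ OK, z = x + c * y) :
    AddSubgroup.closure {z : R | ∃ x ∈ A ⊓ O.toAddSubgroup, ∃ y ∈ OK, z = x * y} = A := by
  refine le_antisymm ((AddSubgroup.closure_le _).mpr ?_) fun a ha => ?_
  · rintro z ⟨x, hx, y, hy, rfl⟩
    rw [mul_comm]
    exact hAideal y hy x hx.1
  obtain ⟨x, hx, y, hy, hxy⟩ := hAcop 1 OK.one_mem
  have hxO : x ∈ O := by
    rw [eq_sub_of_add_eq hxy.symm]
    exact sub_mem O.one_mem (hcO y hy)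
  have haOK : a ∈ OK := hAsub ha
  have hca : c * a ∈ A ⊓ O.toAddSubgroup := ⟨hAideal c hc a ha, hcO a haOK⟩
  have hsplit : a = x * a + (c * a) * y := by
    calc a = (x + c * y) * a := by rw [← hxy, one_mul]
      _ = x * a + (c * a) * y := by ring
  rw [hsplit]
  exact add_mem (AddSubgroup.subset_closure ⟨x, ⟨hx, hxO⟩, a, haOK, rfl⟩)
    (AddSubgroup.subset_closure ⟨c * a, hca, y, hy, rfl⟩)

end Subring

theorem stmt_11_general (K : Type*) [Field K]
    (f : ℕ) (N : ℕ)
    (OK : Subring K)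
    (O : Subring K)
    (hO : ∀ x : K, x ∈ O ↔ ∃ n : ℤ, ∃ y ∈ OK, x = (n : K) + (f : K) * y)
    (A : AddSubgroup K) (hAsub : (A : Set K) ⊆ OK)
    (hAideal : ∀ x ∈ OK, ∀ y ∈ A, x * y ∈ A)
    (hAcop : ∀ z ∈ OK, ∃ x ∈ A, ∃ y ∈ OK, z = x + ((N * f : ℕ) : K) * y) :
    (∀ z ∈ OK, ∃ w ∈ O, z - w ∈ A) ∧
    A.relIndex OK.toAddSubgroup = (A ⊓ O.toAddSubgroup).relIndex O.toAddSubgroup ∧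
    AddSubgroup.closure {z : K | ∃ x ∈ A ⊓ O.toAddSubgroup, ∃ y ∈ OK, z = x * y} = A := by
  have hcO : ∀ y ∈ OK, ((N * f : ℕ) : K) * y ∈ O := fun y hy =>
    (hO _).mpr ⟨0, N * y, OK.mul_mem (natCast_mem OK N) hy, by push_cast; ring⟩
  have hOle : O ≤ OK := fun x hx => by
    obtain ⟨n, y, hy, rfl⟩ := (hO x).mp hx
    exact add_mem (intCast_mem OK n) (OK.mul_mem (natCast_mem OK f) hy)
  have hsurj := OK.exists_mem_sub_mem_of_mul_mem O A hcO hAcop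
  refine ⟨hsurj, ?_, OK.closure_inf_mul_eq O A (natCast_mem OK _) hAsub hAideal hcO hAcop⟩
  rw [OK.toAddSubgroup_eq_sup O A hAsub hOle hsurj, AddSubgroup.relIndex_sup_left,
    AddSubgroup.inf_relIndex_right]

/-- Let `O = ℤ + f·O_K` be the order of conductor `f` in an imaginary quadratic field `K` and
let `A` be an `O_K`-ideal with `A + Nf·O_K = O_K`. Then the natural map
`O/(A ∩ O) → O_K/A` is an isomorphism (it is injective by definition, and surjective), in
particular `N(A) = N(A ∩ O)`, and `(A ∩ O)·O_K = A`. -/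
theorem stmt_11 (K : Type*) [Field K] [NumberField K]
    (hdeg : Module.finrank ℚ K = 2)
    (himag : IsEmpty (K →+* ℝ))
    (f : ℕ) (hf : 0 < f) (N : ℕ) (hN : 0 < N)
    (OK : Subring K) (hOK : (OK : Set K) = ((integralClosure ℤ K : Subalgebra ℤ K) : Set K))
    (O : Subring K)
    (hO : ∀ x : K, x ∈ O ↔ ∃ n : ℤ, ∃ y ∈ OK, x = (n : K) + (f : K) * y)
    (A : AddSubgroup K) (hAsub : (A : Set K) ⊆ OK)
    (hAideal : ∀ x ∈ OK, ∀ y ∈ A, x * y ∈ A)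
    (hAcop : ∀ z ∈ OK, ∃ x ∈ A, ∃ y ∈ OK, z = x + ((N * f : ℕ) : K) * y) :
    (∀ z ∈ OK, ∃ w ∈ O, z - w ∈ A) ∧
    A.relIndex OK.toAddSubgroup = (A ⊓ O.toAddSubgroup).relIndex O.toAddSubgroup ∧
    AddSubgroup.closure {z : K | ∃ x ∈ A ⊓ O.toAddSubgroup, ∃ y ∈ OK, z = x * y} = A :=
  stmt_11_general K f N OK O hO A hAsub hAideal hAcop
end

section
/- An integer m is properly N-represented by an integral binary quadratic form f(x,y) if and only if there exist integers b, c such that f is Γ_0(N)-equivalent to mx² + bxy + cy². -/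
/-- `m` is properly `N`-represented by `f(x,y) = ax² + bxy + cy²`. -/
def ProperlyNRep (N : ℕ) (a b c m : ℤ) : Prop :=
  ∃ x y : ℤ, Int.gcd x N = 1 ∧ (N : ℤ) ∣ y ∧ Int.gcd x y = 1 ∧
    a * x ^ 2 + b * x * y + c * y ^ 2 = m

/- A form properly represents `m` at a primitive vector `(x, y)` exactly when `m` is the leading
coefficient of the form transformed by an `SL₂(ℤ)` matrix with first column `(x, y)`: primitive
vectors are precisely the first columns of such matrices, and the condition `N ∣ y` is then the
`Γ₀(N)` condition `N ∣ r`. Conversely, `N ∣ r` makes `p` coprime to `N` because it is coprime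
to `r`. -/

theorem exists_actF_eq_iff (p q r s : ℤ) (A : ℤ × ℤ × ℤ) (m : ℤ) :
    (∃ b' c' : ℤ, actF p q r s A = (m, b', c')) ↔
      A.1 * p ^ 2 + A.2.1 * p * r + A.2.2 * r ^ 2 = m := by
  constructor
  · rintro ⟨b', c', h⟩
    exact congrArg Prod.fst h
  · rintro rfl
    exact ⟨_, _, rfl⟩

theorem IsCoprime.exists_det_eq_one {x y : ℤ} (h : IsCoprime x y) :
    ∃ q s : ℤ, x * s - q * y = 1 := by
  obtain ⟨u, v, huv⟩ := h
  exact ⟨-v, u, by linear_combination huv⟩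

theorem isCoprime_of_det_eq_one {p q r s : ℤ} (h : p * s - q * r = 1) : IsCoprime p r :=
  ⟨s, -q, by linear_combination h⟩

theorem stmt_13_general (N : ℕ) (a b c m : ℤ) :
    ProperlyNRep N a b c m ↔
      ∃ b' c' : ℤ, ∃ p q r s : ℤ, p * s - q * r = 1 ∧ (N : ℤ) ∣ r ∧
        actF p q r s (a, b, c) = (m, b', c') := by
  simp only [ProperlyNRep, ← Int.isCoprime_iff_gcd_eq_one]
  constructor
  · rintro ⟨x, y, -, hNy, hxy, hm⟩
    obtain ⟨q, s, hdet⟩ := hxy.exists_det_eq_one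
    obtain ⟨b', c', hact⟩ := (exists_actF_eq_iff x q y s (a, b, c) m).mpr hm
    exact ⟨b', c', x, q, y, s, hdet, hNy, hact⟩
  · rintro ⟨b', c', p, q, r, s, hdet, hNr, hact⟩
    have hpr := isCoprime_of_det_eq_one hdet
    exact ⟨p, r, hpr.of_isCoprime_of_dvd_right hNr, hNr, hpr,
      (exists_actF_eq_iff p q r s (a, b, c) m).mp ⟨b', c', hact⟩⟩

/-- An integer `m` is properly `N`-represented by `f` iff `f` is `Γ₀(N)`-equivalent to a form
`mx² + b'xy + c'y²`. -/
theorem stmt_13 (N : ℕ) (hN : 0 < N) (a b c m : ℤ) :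
    ProperlyNRep N a b c m ↔
      ∃ b' c' : ℤ, ∃ p q r s : ℤ, p * s - q * r = 1 ∧ (N : ℤ) ∣ r ∧
        actF p q r s (a, b, c) = (m, b', c') :=
  stmt_13_general N a b c m
end

section
/- Let D ≡ 0 or 1 (mod 4), m an odd integer with gcd(m,D) = 1, and N a positive integer. Then m is properly N-represented by some primitive form of discriminant D if and only if D is a quadratic residue modulo m. -/
/-!
If `f = [a, b, c]` takes the value `m` at a primitive vector `(x, y)`, complete it to a matrix
`[[x, -q], [y, p]]` of determinant `px + qy = 1`; the transformed form is equivalent to `f`, so it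
has discriminant `D` and leading coefficient `m`, so its middle coefficient is a square root of
`D` modulo `4m`. Conversely a square root `b` of `D` modulo `4m` (which exists for odd `m` once
`D ≡ 0, 1 (mod 4)`) gives the form `[m, b, (b² - D)/(4m)]`, which represents `m` at `(1, 0)` and
is primitive because `gcd(m, D) = 1`.
-/

theorem exists_sq_modEq_discr_of_isCoprime (a b c : ℤ) {x y : ℤ} (hxy : IsCoprime x y) :
    ∃ t : ℤ, t ^ 2 ≡ b ^ 2 - 4 * a * c [ZMOD a * x ^ 2 + b * x * y + c * y ^ 2] := by
  obtain ⟨p, q, hpq⟩ := hxy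
  refine ⟨q * (2 * a * x + b * y) - p * (b * x + 2 * c * y),
    (Int.modEq_iff_dvd.mpr ⟨4 * (a * q ^ 2 - b * p * q + c * p ^ 2), ?_⟩).symm⟩
  linear_combination (b ^ 2 - 4 * a * c) * (p * x + q * y + 1) * hpq

theorem exists_discr_eq_of_sq_modEq {D m x : ℤ} (hD4 : D % 4 = 0 ∨ D % 4 = 1) (hm : Odd m)
    (hx : x ^ 2 ≡ D [ZMOD m]) : ∃ b c : ℤ, b ^ 2 - 4 * m * c = D := by
  -- `b ≡ x (mod m)`, and `b - D = (x - D)(m + 1)` is even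
  set b := x + m * (x - D)
  have hm_dvd : m ∣ b ^ 2 - D := by
    obtain ⟨k, hk⟩ := hx.dvd
    exact ⟨-k + (x - D) * (2 * x + m * (x - D)), by linear_combination -hk⟩
  have hfour_dvd : 4 ∣ b ^ 2 - D := by
    obtain ⟨k, hk⟩ := hm.add_one
    obtain ⟨e, he⟩ : 4 ∣ D * (D - 1) := Int.dvd_iff_emod_eq_zero.mpr <| by
      rcases hD4 with h | h <;> simp [Int.mul_emod, Int.sub_emod, h]
    exact ⟨(x - D) ^ 2 * k ^ 2 + D * k * (x - D) + e, by
      linear_combination he + (x - D) * (x + m * (x - D) + D + 2 * k * (x - D)) * hk⟩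
  have h4m : IsCoprime 4 m := by
    simpa using (Int.isCoprime_two_left.mpr hm).mul_left (Int.isCoprime_two_left.mpr hm)
  obtain ⟨c, hc⟩ := h4m.mul_dvd hfour_dvd hm_dvd
  exact ⟨b, c, by linarith⟩

theorem gcd_gcd_eq_one_of_discr {a b c D : ℤ} (hdisc : b ^ 2 - 4 * a * c = D)
    (haD : Int.gcd a D = 1) : Int.gcd (Int.gcd a b) c = 1 := by
  set g := Int.gcd (Int.gcd a b) c
  have hga : (g : ℤ) ∣ a := (Int.gcd_dvd_left _ _).trans (Int.gcd_dvd_left _ _)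
  have hgb : (g : ℤ) ∣ b := (Int.gcd_dvd_left _ _).trans (Int.gcd_dvd_right _ _)
  have hgD : (g : ℤ) ∣ D := hdisc ▸ (dvd_pow hgb two_ne_zero).sub ((hga.mul_left 4).mul_right c)
  exact Nat.dvd_one.mp (haD ▸ Int.dvd_gcd hga hgD)

theorem properlyNRep_self (N : ℕ) (a b c : ℤ) : ProperlyNRep N a b c a :=
  ⟨1, 0, by simp, dvd_zero _, by simp, by ring⟩

theorem stmt_14_general (D m : ℤ) (N : ℕ) (hD4 : D % 4 = 0 ∨ D % 4 = 1)
    (hm : Odd m) (hmD : Int.gcd m D = 1) :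
    (∃ a b c : ℤ, Int.gcd (Int.gcd a b) c = 1 ∧ b ^ 2 - 4 * a * c = D ∧
      ProperlyNRep N a b c m) ↔
    ∃ x : ℤ, x ^ 2 ≡ D [ZMOD m] := by
  constructor
  · rintro ⟨a, b, c, -, rfl, x, y, -, -, hxy, rfl⟩
    exact exists_sq_modEq_discr_of_isCoprime a b c (Int.isCoprime_iff_gcd_eq_one.mpr hxy)
  · rintro ⟨x, hx⟩
    obtain ⟨b, c, hdisc⟩ := exists_discr_eq_of_sq_modEq hD4 hm hx
    exact ⟨m, b, c, gcd_gcd_eq_one_of_discr hdisc hmD, hdisc, properlyNRep_self N m b c⟩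

/-- For `D ≡ 0, 1 (mod 4)`, `m` odd with `gcd(m, D) = 1`, and `N ≥ 1`: `m` is properly
`N`-represented by some primitive form of discriminant `D` iff `D` is a quadratic residue
modulo `m`. -/
theorem stmt_14 (D m : ℤ) (N : ℕ) (hD4 : D % 4 = 0 ∨ D % 4 = 1)
    (hm : Odd m) (hmD : Int.gcd m D = 1) (hN : 0 < N) :
    (∃ a b c : ℤ, Int.gcd (Int.gcd a b) c = 1 ∧ b ^ 2 - 4 * a * c = D ∧
      ProperlyNRep N a b c m) ↔
    ∃ x : ℤ, x ^ 2 ≡ D [ZMOD m] :=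
  stmt_14_general D m N hD4 hm hmD
end

section
/- Let f(x,y) = ax²+bxy+cy² be a primitive binary quadratic form and n, N positive integers with gcd(a,N) = 1. Then there exists a positive integer m with gcd(m, nN) = 1 such that m is properly N-represented by f. -/
/-!
Take `m = f(x, y)` for a point chosen prime by prime: for each prime `p ∣ nN`, put `p ∣ y` if
`p ∤ a` (then `m ≡ a x²`), `p ∣ x` if `p ∣ a` but `p ∤ c` (then `m ≡ c y²`), and neither if `p`
divides `a` and `c` (then `m ≡ b x y` with `p ∤ b` by primitivity); in each case `p ∤ m`.
Products of the relevant primes realise this pattern, with `N ∣ y` and `gcd(x, N) = 1` because the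
primes of `N` do not divide `a`. Positive-definiteness makes `m > 0`.
-/

open Finset

section BinaryForm

variable {a b c x y p : ℤ}

lemma form_pos (ha : 0 < a) (hdisc : b ^ 2 - 4 * a * c < 0) (hx : x ≠ 0) :
    0 < a * x ^ 2 + b * x * y + c * y ^ 2 := by
  rcases eq_or_ne y 0 with rfl | hy
  · simpa using mul_pos ha (sq_pos_of_ne_zero hx)
  · nlinarith [sq_nonneg (2 * a * x + b * y), mul_pos (neg_pos.mpr hdisc) (sq_pos_of_ne_zero hy)]

lemma not_dvd_form_of_dvd_y (hy : p ∣ y) (h : ¬ p ∣ a * x ^ 2) :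
    ¬ p ∣ a * x ^ 2 + b * x * y + c * y ^ 2 := by
  rw [show a * x ^ 2 + b * x * y + c * y ^ 2 = a * x ^ 2 + y * (b * x + c * y) by ring,
    dvd_add_left (hy.mul_right _)]
  exact h

lemma not_dvd_form_of_dvd_x (hx : p ∣ x) (h : ¬ p ∣ c * y ^ 2) :
    ¬ p ∣ a * x ^ 2 + b * x * y + c * y ^ 2 := by
  rw [show a * x ^ 2 + b * x * y + c * y ^ 2 = x * (a * x + b * y) + c * y ^ 2 by ring,
    dvd_add_right (hx.mul_right _)]
  exact h

lemma not_dvd_form_of_dvd_a_c (ha : p ∣ a) (hc : p ∣ c) (h : ¬ p ∣ b * x * y) :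
    ¬ p ∣ a * x ^ 2 + b * x * y + c * y ^ 2 := by
  rw [show a * x ^ 2 + b * x * y + c * y ^ 2 = b * x * y + (a * x ^ 2 + c * y ^ 2) by ring,
    dvd_add_left ((ha.mul_right _).add (hc.mul_right _))]
  exact h

lemma Prime.not_dvd_form (hp : Prime p) (hprim : Int.gcd (Int.gcd a b) c = 1)
    (hpx : p ∣ x ↔ p ∣ a ∧ ¬ p ∣ c) (hpy : p ∣ y ↔ ¬ p ∣ a) :
    ¬ p ∣ a * x ^ 2 + b * x * y + c * y ^ 2 := by
  by_cases hpa : p ∣ a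
  · have hpy' : ¬ p ∣ y := fun h => hpy.mp h hpa
    by_cases hpc : p ∣ c
    · have hpb : ¬ p ∣ b := fun hpb => hp.not_dvd_one <| by
        simpa [hprim] using Int.dvd_coe_gcd (Int.dvd_coe_gcd hpa hpb) hpc
      have hpx' : ¬ p ∣ x := fun h => (hpx.mp h).2 hpc
      refine not_dvd_form_of_dvd_a_c hpa hpc fun h => ?_
      rcases hp.dvd_or_dvd h with h | h
      · exact (hp.dvd_or_dvd h).elim hpb hpx'
      · exact hpy' h
    · refine not_dvd_form_of_dvd_x (hpx.mpr ⟨hpa, hpc⟩) fun h => ?_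
      exact (hp.dvd_or_dvd h).elim hpc (hpy' ∘ hp.dvd_of_dvd_pow)
  · refine not_dvd_form_of_dvd_y (hpy.mpr hpa) fun h => ?_
    exact (hp.dvd_or_dvd h).elim hpa fun h => hpa (hpx.mp (hp.dvd_of_dvd_pow h)).1

end BinaryForm

lemma Nat.Prime.dvd_prod_primes_iff {s : Finset ℕ} (hs : ∀ q ∈ s, q.Prime) {p : ℕ}
    (hp : p.Prime) : p ∣ ∏ q ∈ s, q ↔ p ∈ s := by
  have hne : ∏ q ∈ s, q ≠ 0 := prod_ne_zero_iff.mpr fun q hq => (hs q hq).ne_zero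
  have h := Nat.mem_primeFactors_of_ne_zero hne (p := p)
  rw [Nat.primeFactors_prod hs, and_iff_right hp] at h
  exact h.symm

lemma exists_coprime_point_with_dvd_pattern {a : ℤ} (c : ℤ) {N : ℕ} (haN : Int.gcd a N = 1)
    {P : Finset ℕ} (hP : ∀ p ∈ P, p.Prime) :
    ∃ x y : ℤ, 0 < x ∧ Int.gcd x N = 1 ∧ (N : ℤ) ∣ y ∧ Int.gcd x y = 1 ∧
      ∀ p ∈ P, ((p : ℤ) ∣ x ↔ (p : ℤ) ∣ a ∧ ¬ (p : ℤ) ∣ c) ∧ ((p : ℤ) ∣ y ↔ ¬ (p : ℤ) ∣ a) := by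
  set S := P.filter fun p : ℕ => (p : ℤ) ∣ a ∧ ¬ (p : ℤ) ∣ c
  set T := P.filter fun p : ℕ => ¬ (p : ℤ) ∣ a
  have hS : ∀ p ∈ S, p.Prime := fun p hp => hP p (mem_filter.mp hp).1
  have hT : ∀ p ∈ T, p.Prime := fun p hp => hP p (mem_filter.mp hp).1
  have hx_dvd {p : ℕ} (hp : p.Prime) : p ∣ ∏ q ∈ S, q ↔ p ∈ S := hp.dvd_prod_primes_iff hS
  have hy_not_dvd {p : ℕ} (hp : p.Prime) (hpy : p ∣ N * ∏ q ∈ T, q) : ¬ (p : ℤ) ∣ a := by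
    rcases (Nat.Prime.dvd_mul hp).mp hpy with hpN | hpT
    · exact fun hpa => hp.ne_one <| Nat.dvd_one.mp <|
        haN ▸ Int.dvd_gcd hpa (Int.natCast_dvd_natCast.mpr hpN)
    · exact (mem_filter.mp ((hp.dvd_prod_primes_iff hT).mp hpT)).2
  have hcop : Nat.Coprime (∏ q ∈ S, q) (N * ∏ q ∈ T, q) := Nat.coprime_of_dvd
    fun p hp hpx hpy => hy_not_dvd hp hpy (mem_filter.mp ((hx_dvd hp).mp hpx)).2.1
  refine ⟨(∏ q ∈ S, q : ℕ), (N * ∏ q ∈ T, q : ℕ), ?_, ?_, ?_, ?_, fun p hp => ⟨?_, ?_⟩⟩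
  · exact_mod_cast prod_pos fun q hq => (hS q hq).pos
  · exact Int.gcd_natCast_natCast _ _ ▸ hcop.coprime_dvd_right (dvd_mul_right N _)
  · exact Int.natCast_dvd_natCast.mpr (dvd_mul_right N _)
  · exact Int.gcd_natCast_natCast _ _ ▸ hcop
  · rw [Int.natCast_dvd_natCast, hx_dvd (hP p hp), mem_filter]
    exact and_iff_right hp
  · rw [Int.natCast_dvd_natCast]
    refine ⟨hy_not_dvd (hP p hp), fun hpa => dvd_mul_of_dvd_right ?_ N⟩
    exact dvd_prod_of_mem _ (mem_filter.mpr ⟨hp, hpa⟩)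

/-- For a primitive positive-definite form `f = ax² + bxy + cy²` with `gcd(a, N) = 1` and
positive integers `n, N`, there is a positive integer `m` coprime to `nN` which is properly
`N`-represented by `f`. -/
theorem stmt_15 (a b c : ℤ) (n N : ℕ) (hn : 0 < n) (hN : 0 < N)
    (hprim : Int.gcd (Int.gcd a b) c = 1) (ha : 0 < a)
    (hdisc : b ^ 2 - 4 * a * c < 0) (haN : Int.gcd a N = 1) :
    ∃ m : ℤ, 0 < m ∧ Int.gcd m ((n * N : ℕ) : ℤ) = 1 ∧ ProperlyNRep N a b c m := by
  obtain ⟨x, y, hx, hxN, hNy, hxy, hpattern⟩ :=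
    exists_coprime_point_with_dvd_pattern c haN fun p => Nat.prime_of_mem_primeFactors (n := n * N)
  refine ⟨_, form_pos ha hdisc hx.ne', ?_, x, y, hxN, hNy, hxy, rfl⟩
  refine Nat.coprime_of_dvd fun p hp hpm hpM => ?_
  have hpP : p ∈ (n * N).primeFactors :=
    Nat.mem_primeFactors.mpr ⟨hp, by rwa [Int.natAbs_natCast] at hpM, (Nat.mul_pos hn hN).ne'⟩
  exact (Nat.prime_iff_prime_int.mp hp).not_dvd_form hprim (hpattern p hpP).1 (hpattern p hpP).2
    (Int.natCast_dvd.mpr hpm)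
end

section
/- Let p ≥ 5 be prime and S_p = {±1, ±2, ..., ±(p-1)/2}. Define f : S_p \ {1} → S_p \ {1} by f(k) = ⟨1 - k⁻¹⟩, where k⁻¹ ∈ S_p denotes the inverse of k mod p and ⟨x⟩ ∈ S_p the representative of x mod p. Then f is well-defined, f³ = id, and f(k) = k if and only if k² - k + 1 ≡ 0 (mod p). -/
/-!
Reducing mod `p`, the map becomes `x ↦ 1 - x⁻¹` on units of `ZMod p`, which is the Möbius
transformation `x ↦ (x - 1) / x` of order three; its fixed points are the roots of
`x² - x + 1`. Two elements of `S_p` with the same residue are equal, since their difference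
has absolute value less than `p`, so the identities mod `p` lift to `S_p`.
-/

def balancedResidues (n : ℕ) : Set ℤ := {k : ℤ | k ≠ 0 ∧ 2 * |k| ≤ (n : ℤ) - 1}

namespace balancedResidues

variable {n : ℕ} {a b : ℤ}

theorem intCast_inj (ha : a ∈ balancedResidues n) (hb : b ∈ balancedResidues n) :
    (a : ZMod n) = b ↔ a = b := by
  refine ⟨fun h ↦ ?_, congrArg _⟩
  rw [ZMod.intCast_eq_intCast_iff_dvd_sub] at h
  have hlt : |b - a| < n := by linarith [abs_sub b a, ha.2, hb.2]
  linarith [Int.eq_zero_of_abs_lt_dvd h hlt]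

theorem nontrivial_zmod (ha : a ∈ balancedResidues n) : Nontrivial (ZMod n) := by
  refine ZMod.nontrivial_iff.2 fun hn ↦ ha.1 (abs_eq_zero.1 ?_)
  have ha_le := ha.2
  rw [hn, Nat.cast_one, sub_self] at ha_le
  linarith [abs_nonneg a]

end balancedResidues

section OneSubInverse

variable {R : Type*} [CommRing R] {k i : R}

theorem one_sub_inverse_iterate_three {j l : R} (hi : k * i = 1) (hj : (1 - i) * j = 1)
    (hl : (1 - j) * l = 1) : 1 - l = k := by
  linear_combination (l * j) * hi + (l * k) * hj + (k - 1) * hl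

theorem eq_one_sub_inverse_iff (hi : k * i = 1) : k = 1 - i ↔ k ^ 2 - k + 1 = 0 := by
  constructor
  · intro h
    linear_combination k * h - hi
  · intro h
    linear_combination i * h - (k - 1) * hi

theorem one_sub_inverse_ne_one [Nontrivial R] (hi : k * i = 1) : 1 - i ≠ 1 := by
  intro h
  have hi0 : i = 0 := by linear_combination -h
  simp [hi0] at hi

end OneSubInverse

theorem stmt_19_general (p : ℕ)
    (Sp : Set ℤ) (hSp : Sp = {k : ℤ | k ≠ 0 ∧ 2 * |k| ≤ (p : ℤ) - 1})
    (inv f : ℤ → ℤ)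
    (hinv : ∀ k ∈ Sp, inv k ∈ Sp ∧ k * inv k ≡ 1 [ZMOD (p : ℤ)])
    (hf : ∀ k ∈ Sp, k ≠ 1 → f k ∈ Sp ∧ f k ≡ 1 - inv k [ZMOD (p : ℤ)]) :
    ∀ k ∈ Sp, k ≠ 1 →
      f k ≠ 1 ∧ f (f (f k)) = k ∧ (f k = k ↔ (p : ℤ) ∣ k ^ 2 - k + 1) := by
  obtain rfl : Sp = balancedResidues p := hSp
  intro k hk hk1
  have := balancedResidues.nontrivial_zmod hk
  have hstep : ∀ x ∈ balancedResidues p, x ≠ 1 → f x ∈ balancedResidues p ∧ f x ≠ 1 ∧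
      (x : ZMod p) * inv x = 1 ∧ (f x : ZMod p) = 1 - inv x := by
    intro x hx hx1
    obtain ⟨hfx, hfx_modEq⟩ := hf x hx hx1
    have hmul : (x : ZMod p) * inv x = 1 := by
      exact_mod_cast (ZMod.intCast_eq_intCast_iff _ _ p).2 (hinv x hx).2
    have hval : (f x : ZMod p) = 1 - inv x := by
      exact_mod_cast (ZMod.intCast_eq_intCast_iff _ _ p).2 hfx_modEq
    refine ⟨hfx, fun h ↦ one_sub_inverse_ne_one hmul ?_, hmul, hval⟩
    rw [← hval, h, Int.cast_one]
  obtain ⟨hfk, hfk1, hk_inv, hfk_val⟩ := hstep k hk hk1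
  obtain ⟨hffk, hffk1, hfk_inv, hffk_val⟩ := hstep _ hfk hfk1
  obtain ⟨hfffk, -, hffk_inv, hfffk_val⟩ := hstep _ hffk hffk1
  refine ⟨hfk1, ?_, ?_⟩
  · rw [← balancedResidues.intCast_inj hfffk hk, hfffk_val]
    exact one_sub_inverse_iterate_three hk_inv (hfk_val ▸ hfk_inv) (hffk_val ▸ hffk_inv)
  · rw [← balancedResidues.intCast_inj hfk hk, ← ZMod.intCast_zmod_eq_zero_iff_dvd, hfk_val,
      eq_comm]
    push_cast
    exact eq_one_sub_inverse_iff hk_inv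

/-- Let `p ≥ 5` be prime and `S_p = {±1, …, ±(p-1)/2}`. Suppose `inv k` is the representative
in `S_p` of the inverse of `k` mod `p`, and on `S_p \ {1}` the function `f` satisfies
`f k ∈ S_p` with `f k ≡ 1 - k⁻¹ (mod p)`. Then `f` maps `S_p \ {1}` to itself,
`f³ = id`, and `f k = k` iff `k² - k + 1 ≡ 0 (mod p)`. -/
theorem stmt_19 (p : ℕ) (hp : p.Prime) (hp5 : 5 ≤ p)
    (Sp : Set ℤ) (hSp : Sp = {k : ℤ | k ≠ 0 ∧ 2 * |k| ≤ (p : ℤ) - 1})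
    (inv f : ℤ → ℤ)
    (hinv : ∀ k ∈ Sp, inv k ∈ Sp ∧ k * inv k ≡ 1 [ZMOD (p : ℤ)])
    (hf : ∀ k ∈ Sp, k ≠ 1 → f k ∈ Sp ∧ f k ≡ 1 - inv k [ZMOD (p : ℤ)]) :
    ∀ k ∈ Sp, k ≠ 1 →
      f k ≠ 1 ∧ f (f (f k)) = k ∧ (f k = k ↔ (p : ℤ) ∣ k ^ 2 - k + 1) :=
  stmt_19_general p Sp hSp inv f hinv hf
end
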